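/- For α, γ > −1 and m ≥ 1: c_{α,γ} ∫₀¹ P_m^{(γ,α)}(2x−1) P_{m-1}^{(γ+2,α)}(2x−1) (1−x)^{γ+1} x^α dx = − m(γ+1)_m(α+1)_m / (m!(2m+γ+α+1)(γ+α+2)_m), with c_{α,γ} = Γ(γ+α+2)/(Γ(γ+1)Γ(α+1)). -/
import Mathlib


open MeasureTheory Finset

noncomputable section

/-- Pochhammer symbol `(a)ₖ = a(a+1)⋯(a+k-1)` for real `a`. -/
def poch (a : ℝ) (k : ℕ) : ℝ := (ascPochhammer ℝ k).eval a

/-- The Jacobi polynomial `P_n^{(a,b)}(x)` via the hypergeometric sum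
`P_n^{(a,b)}(x) = ((a+1)ₙ/n!) Σ_{k=0}^n ((-n)ₖ(n+a+b+1)ₖ)/((a+1)ₖ k!) ((1-x)/2)^k`. -/
def jacobiP (n : ℕ) (a b : ℝ) (x : ℝ) : ℝ :=
  poch (a + 1) n / (Nat.factorial n : ℝ) *
    ∑ k ∈ range (n + 1),
      poch (-(n : ℝ)) k * poch ((n : ℝ) + a + b + 1) k /
        (poch (a + 1) k * (Nat.factorial k : ℝ)) * ((1 - x) / 2) ^ k

/-- The normalizing constant `c_{α,γ} = Γ(γ+α+2)/(Γ(γ+1)Γ(α+1))`. -/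
def cJ (α γ : ℝ) : ℝ := Real.Gamma (γ + α + 2) / (Real.Gamma (γ + 1) * Real.Gamma (α + 1))

lemma poch_zero (a : ℝ) : poch a 0 = 1 := by simp [poch]

lemma poch_succ (a : ℝ) (n : ℕ) : poch a (n + 1) = poch a n * (a + n) :=
  ascPochhammer_succ_eval n a

lemma poch_succ_left (a : ℝ) (n : ℕ) : poch a (n + 1) = a * poch (a + 1) n := by
  unfold poch
  rw [ascPochhammer_succ_left, Polynomial.X_mul, Polynomial.eval_mul_X, Polynomial.eval_comp]
  simp [mul_comm]

lemma poch_pos {a : ℝ} (ha : 0 < a) (n : ℕ) : 0 < poch a n := ascPochhammer_pos n a ha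

lemma poch_ne_zero {a : ℝ} (ha : 0 < a) (n : ℕ) : poch a n ≠ 0 := (poch_pos ha n).ne'

lemma poch_one_eq_factorial (n : ℕ) : poch 1 n = (Nat.factorial n : ℝ) := by
  simpa [poch] using ascPochhammer_eval_one ℝ n

lemma poch_add (a : ℝ) (m n : ℕ) : poch a (m + n) = poch a m * poch (a + m) n := by
  induction n with
  | zero => simp [poch_zero]
  | succ n ih => rw [← add_assoc, poch_succ, ih, poch_succ]; push_cast; ring

lemma poch_neg_nat {m k : ℕ} (h : k ≤ m) :
    poch (-(m : ℝ)) k = (-1) ^ k * (m.choose k) * (Nat.factorial k : ℝ) := by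
  induction k with
  | zero => simp [poch_zero]
  | succ k ih =>
    have hk : k ≤ m := le_of_lt (Nat.lt_of_succ_le h)
    rw [poch_succ, ih hk]
    have h2 : m.choose (k+1) * (k+1) = m.choose k * (m - k) := Nat.choose_succ_right_eq m k
    have hch : (m.choose (k+1) : ℝ) * ((k:ℝ)+1) = (m.choose k : ℝ) * ((m:ℝ) - k) := by
      have h3 := congrArg (Nat.cast (R := ℝ)) h2
      push_cast [Nat.cast_sub hk] at h3
      linarith
    have hfact : (Nat.factorial (k+1) : ℝ) = ((k:ℝ)+1) * (Nat.factorial k : ℝ) := by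
      rw [Nat.factorial_succ]; push_cast; ring
    rw [hfact, show (-(m:ℝ) + k) = -((m:ℝ) - k) by ring, pow_succ]
    linear_combination (-(1:ℝ))^k * (Nat.factorial k) * hch

lemma poch_neg_nat_eq_zero {t n : ℕ} (h : t < n) : poch (-(t : ℝ)) n = 0 := by
  have : n = (t + 1) + (n - t - 1) := by omega
  rw [this, poch_add, poch_succ]
  simp

/-- Chu–Vandermonde, polynomial form. -/
lemma cv_poly (m : ℕ) (b c : ℝ) :
    ∑ k ∈ range (m + 1),
      (-1 : ℝ) ^ k * (m.choose k) * poch b k * poch (c + k) (m - k) = poch (c - b) m := by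
  induction m generalizing b c with
  | zero => simp [poch_zero]
  | succ m ih =>
    have key : ∑ k ∈ range (m + 2),
          (-1 : ℝ) ^ k * ((m+1).choose k) * poch b k * poch (c + k) (m + 1 - k)
        = (∑ k ∈ range (m + 1),
            (-1 : ℝ) ^ (k+1) * (m.choose k) * poch b (k+1) * poch (c + ↑(k+1)) (m - k))
        + ∑ k ∈ range (m + 2),
            (-1 : ℝ) ^ k * (m.choose k) * poch b k * poch (c + k) (m + 1 - k) := by
      rw [Finset.sum_range_succ'
        (fun k => (-1 : ℝ) ^ k * ((m+1).choose k) * poch b k * poch (c + k) (m + 1 - k)) (m+1),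
        Finset.sum_range_succ'
        (fun k => (-1 : ℝ) ^ k * (m.choose k) * poch b k * poch (c + k) (m + 1 - k)) (m+1)]
      have hterm : ∀ k ∈ range (m + 1),
          (-1 : ℝ) ^ (k+1) * ((m+1).choose (k+1)) * poch b (k+1) * poch (c + ↑(k+1)) (m + 1 - (k+1))
          = ((-1 : ℝ) ^ (k+1) * (m.choose k) * poch b (k+1) * poch (c + ↑(k+1)) (m - k))
            + (-1 : ℝ) ^ (k+1) * (m.choose (k+1)) * poch b (k+1) * poch (c + ↑(k+1)) (m + 1 - (k+1)) := by
        intro k hk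
        rw [Nat.choose_succ_succ, show m + 1 - (k+1) = m - k from by omega]
        push_cast
        ring
      rw [Finset.sum_congr rfl hterm, Finset.sum_add_distrib]
      norm_num
      ring
    rw [key]
    have hg1 : ∀ k ∈ range (m + 1),
        (-1 : ℝ) ^ (k+1) * (m.choose k) * poch b (k+1) * poch (c + ↑(k+1)) (m - k)
        = -b * ((-1 : ℝ) ^ k * (m.choose k) * poch (b+1) k * poch ((c+1) + k) (m - k)) := by
      intro k hk
      rw [poch_succ_left b k, show c + ((k:ℕ)+1:ℕ) = (c+1) + (k:ℝ) from by push_cast; ring]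
      ring
    rw [Finset.sum_congr rfl hg1, ← Finset.mul_sum, ih]
    have hh : ∀ k ∈ range (m + 1),
        (-1 : ℝ) ^ k * (m.choose k) * poch b k * poch (c + k) (m + 1 - k)
        = (c + m) * ((-1 : ℝ) ^ k * (m.choose k) * poch b k * poch (c + k) (m - k)) := by
      intro k hk
      have hk' : k ≤ m := by simpa [Nat.lt_succ_iff] using hk
      rw [show m + 1 - k = (m - k) + 1 from by omega, poch_succ,
        show c + (k:ℝ) + ((m - k : ℕ) : ℝ) = c + m from by rw [Nat.cast_sub hk']; ring]
      ring
    rw [Finset.sum_range_succ, Finset.sum_congr rfl hh, ← Finset.mul_sum, ih]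
    simp only [Nat.choose_succ_self, Nat.cast_zero, zero_mul, mul_zero, add_zero, poch_succ]
    push_cast
    ring


/-- Chu–Vandermonde, hypergeometric form. -/
lemma cv (m : ℕ) (b : ℝ) {c : ℝ} (hc : 0 < c) :
    ∑ k ∈ range (m + 1), poch (-(m : ℝ)) k * poch b k / (poch c k * (Nat.factorial k : ℝ))
      = poch (c - b) m / poch c m := by
  rw [eq_div_iff (poch_ne_zero hc m), Finset.sum_mul]
  rw [← cv_poly m b c]
  apply Finset.sum_congr rfl
  intro k hk
  have hk' : k ≤ m := by simpa [Nat.lt_succ_iff] using hk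
  have hsplit : poch c m = poch c k * poch (c + k) (m - k) := by
    rw [← poch_add, Nat.add_sub_cancel' hk']
  rw [hsplit, poch_neg_nat hk']
  have h1 : poch c k ≠ 0 := poch_ne_zero hc k
  have h2 : (Nat.factorial k : ℝ) ≠ 0 := by exact_mod_cast (Nat.factorial_pos k).ne'
  field_simp

lemma Gamma_add_poch {x : ℝ} (hx : 0 < x) (n : ℕ) :
    Real.Gamma (x + n) = Real.Gamma x * poch x n := by
  induction n with
  | zero => simp [poch_zero]
  | succ n ih =>
    have hxn : x + n ≠ 0 := by positivity
    rw [show x + ((n:ℕ)+1:ℕ) = (x + n) + 1 from by push_cast; ring, Real.Gamma_add_one hxn, ih,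
      poch_succ]
    ring

lemma beta_integrable {p q : ℝ} (hp : -1 < p) (hq : -1 < q) :
    IntervalIntegrable (fun x : ℝ => x ^ p * (1 - x) ^ q) volume 0 1 := by
  have h := Complex.betaIntegral_convergent (u := (p:ℂ) + 1) (v := (q:ℂ) + 1)
    (by simpa using by linarith) (by simpa using by linarith)
  rw [intervalIntegrable_iff_integrableOn_Ioc_of_le zero_le_one] at h ⊢
  have h2 : IntegrableOn (fun x : ℝ => ((x:ℂ) ^ ((p:ℂ)+1-1) * (1-(x:ℂ)) ^ ((q:ℂ)+1-1)).re)
      (Set.Ioc (0:ℝ) 1) volume := h.re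
  apply h2.congr_fun ?_ measurableSet_Ioc
  intro x hx
  obtain ⟨hx0, hx1⟩ := hx
  have e1 : ((p:ℂ) + 1 - 1) = ((p:ℝ) : ℂ) := by ring
  have e2 : ((q:ℂ) + 1 - 1) = ((q:ℝ) : ℂ) := by ring
  simp only [e1, e2]
  rw [show ((1:ℂ) - (x:ℂ)) = (((1 - x : ℝ)) : ℂ) by push_cast; ring]
  rw [← Complex.ofReal_cpow hx0.le, ← Complex.ofReal_cpow (by linarith), ← Complex.ofReal_mul,
    Complex.ofReal_re]

lemma beta_eval {p q : ℝ} (hp : -1 < p) (hq : -1 < q) :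
    ∫ x in (0:ℝ)..1, x ^ p * (1 - x) ^ q
      = Real.Gamma (p+1) * Real.Gamma (q+1) / Real.Gamma (p+q+2) := by
  have hs : 0 < ((p:ℂ)+1).re := by simpa using by linarith
  have ht : 0 < ((q:ℂ)+1).re := by simpa using by linarith
  have h := Complex.Gamma_mul_Gamma_eq_betaIntegral hs ht
  have hbeta : Complex.betaIntegral ((p:ℂ)+1) ((q:ℂ)+1)
      = ((∫ x in (0:ℝ)..1, x ^ p * (1 - x) ^ q : ℝ) : ℂ) := by
    rw [Complex.betaIntegral, ← intervalIntegral.integral_ofReal]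
    apply intervalIntegral.integral_congr
    intro x hx
    rw [Set.uIcc_of_le zero_le_one] at hx
    obtain ⟨hx0, hx1⟩ := hx
    have e1 : ((p:ℂ) + 1 - 1) = ((p:ℝ) : ℂ) := by ring
    have e2 : ((q:ℂ) + 1 - 1) = ((q:ℝ) : ℂ) := by ring
    simp only [e1, e2]
    rw [show ((1:ℂ) - (x:ℂ)) = (((1 - x : ℝ)) : ℂ) by push_cast; ring]
    rw [← Complex.ofReal_cpow hx0, ← Complex.ofReal_cpow (by linarith), ← Complex.ofReal_mul]
  rw [hbeta] at h
  have hsum : ((p:ℂ)+1) + ((q:ℂ)+1) = (((p+q+2 : ℝ)) : ℂ) := by push_cast; ring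
  rw [hsum, show ((p:ℂ)+1) = (((p+1:ℝ)):ℂ) from by push_cast; ring,
    show ((q:ℂ)+1) = (((q+1:ℝ)):ℂ) from by push_cast; ring] at h
  rw [Complex.Gamma_ofReal, Complex.Gamma_ofReal, Complex.Gamma_ofReal] at h
  have h2 : Real.Gamma (p+1) * Real.Gamma (q+1)
      = Real.Gamma (p+q+2) * ∫ x in (0:ℝ)..1, x ^ p * (1 - x) ^ q := by
    exact_mod_cast h
  have hG : Real.Gamma (p+q+2) ≠ 0 := (Real.Gamma_pos_of_pos (by linarith)).ne'
  field_simp [hG] at h2 ⊢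
  linarith [h2]


lemma rpow_mul_npow {x : ℝ} (hx : 0 ≤ x) {a : ℝ} (ha : -1 < a) (j : ℕ) :
    x ^ a * x ^ j = x ^ (a + j) := by
  rcases eq_or_lt_of_le hx with h | h
  · cases j with
    | zero => simp
    | succ j =>
      rw [← h]
      have hpos : (0:ℝ) < a + ((j:ℕ)+1:ℕ) := by
        have := Nat.cast_nonneg (α := ℝ) j
        push_cast
        linarith
      rw [Real.zero_rpow hpos.ne']
      simp
  · rw [← Real.rpow_natCast x j, ← Real.rpow_add h]


set_option maxHeartbeats 2000000 in
/-- For `m ≥ 1`,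
`c_{α,γ} ∫₀¹ P_m^{(γ,α)}(2x−1)P_{m-1}^{(γ+2,α)}(2x−1)(1−x)^{γ+1}x^α dx
 = −m(γ+1)_m(α+1)_m/(m!(2m+γ+α+1)(γ+α+2)_m)`. -/
theorem jacobi_diagonal_integral (α γ : ℝ) (hα : -1 < α) (hγ : -1 < γ)
    (m : ℕ) (hm : 1 ≤ m) :
    cJ α γ * ∫ x in (0:ℝ)..1,
        jacobiP m γ α (2 * x - 1) * jacobiP (m - 1) (γ + 2) α (2 * x - 1) *
          ((1 - x) ^ (γ + 1) * x ^ α) =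
      -((m : ℝ) * poch (γ + 1) m * poch (α + 1) m) /
        ((Nat.factorial m : ℝ) * (2 * (m : ℝ) + γ + α + 1) * poch (γ + α + 2) m) := by
  obtain ⟨n, rfl⟩ : ∃ n, m = n + 1 := ⟨m - 1, (Nat.succ_pred_eq_of_pos hm).symm⟩
  simp only [Nat.add_sub_cancel]
  -- coefficient abbreviations
  set E1 : ℕ → ℝ := fun l => poch (γ + 1) (n+1) / (Nat.factorial (n+1) : ℝ) *
      (poch (-((n+1 : ℕ) : ℝ)) l * poch (((n+1 : ℕ) : ℝ) + γ + α + 1) l /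
        (poch (γ + 1) l * (Nat.factorial l : ℝ))) with hE1
  set E2 : ℕ → ℝ := fun k => poch (γ + 2 + 1) n / (Nat.factorial n : ℝ) *
      (poch (-(n : ℝ)) k * poch ((n : ℝ) + (γ + 2) + α + 1) k /
        (poch (γ + 2 + 1) k * (Nat.factorial k : ℝ))) with hE2
  set T : ℕ → ℕ → ℕ → ℝ := fun k j l =>
      E2 k * ((-1 : ℝ) ^ j * (((k+1).choose j : ℕ) : ℝ)) * E1 l with hT
  -- Step 1: expansion of the Jacobi polynomials
  have hJ1 : ∀ x : ℝ, jacobiP (n+1) γ α (2 * x - 1)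
      = ∑ l ∈ range (n+2), E1 l * (1 - x) ^ l := by
    intro x
    rw [jacobiP, Finset.mul_sum]
    refine Finset.sum_congr rfl fun l _ => ?_
    rw [show (1 - (2 * x - 1)) / 2 = 1 - x by ring, hE1]
    ring
  have hJ2 : ∀ x : ℝ, jacobiP n (γ+2) α (2 * x - 1)
      = ∑ k ∈ range (n+1), E2 k * (1 - x) ^ k := by
    intro x
    rw [jacobiP, Finset.mul_sum]
    refine Finset.sum_congr rfl fun k _ => ?_
    rw [show (1 - (2 * x - 1)) / 2 = 1 - x by ring, hE2]
    ring
  -- Step 2: pointwise identity on [0,1]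
  have key : Set.EqOn
      (fun x : ℝ => jacobiP (n+1) γ α (2 * x - 1) * jacobiP n (γ+2) α (2 * x - 1) *
        ((1 - x) ^ (γ + 1) * x ^ α))
      (fun x : ℝ => ∑ k ∈ range (n+1), ∑ j ∈ range (k+2), ∑ l ∈ range (n+2),
        T k j l * (x ^ (α + (j : ℝ)) * (1 - x) ^ (γ + (l : ℝ))))
      (Set.uIcc (0:ℝ) 1) := by
    intro x hx
    rw [Set.uIcc_of_le zero_le_one] at hx
    obtain ⟨hx0, hx1⟩ := hx
    have hy : (0:ℝ) ≤ 1 - x := by linarith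
    simp only
    rw [hJ1, hJ2, Finset.sum_mul_sum]
    simp only [Finset.sum_mul]
    rw [Finset.sum_comm]
    refine Finset.sum_congr rfl fun k hk => ?_
    rw [Finset.sum_comm]
    refine Finset.sum_congr rfl fun l hl => ?_
    -- per (k,l) identity
    have hbin : (1 - x) ^ (k+1)
        = ∑ j ∈ range (k+2), ((-1:ℝ) ^ j * (((k+1).choose j : ℕ) : ℝ)) * x ^ j := by
      rw [show (1 - x) = (-x) + 1 by ring, add_pow]
      refine Finset.sum_congr rfl fun j hj => ?_
      rw [neg_pow]
      ring
    have eγl : (1-x) ^ γ * (1-x) ^ l = (1-x) ^ (γ + (l : ℝ)) := rpow_mul_npow hy hγ l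
    have eγ1 : (1-x) ^ (γ + 1) = (1-x) ^ γ * (1-x) := by
      have h := rpow_mul_npow hy hγ 1
      push_cast at h
      rw [pow_one] at h
      exact h.symm
    have hLHS : E1 l * (1 - x) ^ l * (E2 k * (1 - x) ^ k) * ((1 - x) ^ (γ + 1) * x ^ α)
        = (E1 l * E2 k) * ((1-x) ^ (k+1) * ((1-x) ^ (γ + (l : ℝ)) * x ^ α)) := by
      rw [eγ1, ← eγl]
      ring
    rw [hLHS, hbin, Finset.sum_mul, Finset.mul_sum]
    refine Finset.sum_congr rfl fun j hj => ?_
    have exj : x ^ α * x ^ j = x ^ (α + (j : ℝ)) := rpow_mul_npow hx0 hα j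
    rw [hT, ← exj]
    ring
  rw [intervalIntegral.integral_congr key]
  -- Step 3: integrate term by term
  have hatom : ∀ (j l : ℕ), IntervalIntegrable
      (fun x : ℝ => x ^ (α + (j : ℝ)) * (1 - x) ^ (γ + (l : ℝ))) volume 0 1 :=
    fun j l => beta_integrable (by have := Nat.cast_nonneg (α := ℝ) j; linarith)
      (by have := Nat.cast_nonneg (α := ℝ) l; linarith)
  have hint : (∫ x in (0:ℝ)..1, ∑ k ∈ range (n+1), ∑ j ∈ range (k+2), ∑ l ∈ range (n+2),
        T k j l * (x ^ (α + (j : ℝ)) * (1 - x) ^ (γ + (l : ℝ))))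
      = ∑ k ∈ range (n+1), ∑ j ∈ range (k+2), ∑ l ∈ range (n+2),
        T k j l * (Real.Gamma (α + (j : ℝ) + 1) * Real.Gamma (γ + (l : ℝ) + 1) /
          Real.Gamma (α + (j : ℝ) + (γ + (l : ℝ)) + 2)) := by
    have hI1 : ∀ k j : ℕ, IntervalIntegrable
        (fun x : ℝ => ∑ l ∈ range (n+2), T k j l * (x ^ (α + (j:ℝ)) * (1 - x) ^ (γ + (l:ℝ))))
        volume 0 1 := by
      intro k j
      have h := IntervalIntegrable.sum (μ := volume) (a := 0) (b := 1) (range (n+2))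
        (f := fun l (x : ℝ) => T k j l * (x ^ (α + (j:ℝ)) * (1 - x) ^ (γ + (l:ℝ))))
        (fun l _ => (hatom j l).const_mul _)
      have e : (∑ l ∈ range (n+2),
          fun (x : ℝ) => T k j l * (x ^ (α + (j:ℝ)) * (1 - x) ^ (γ + (l:ℝ))))
          = fun x : ℝ => ∑ l ∈ range (n+2), T k j l * (x ^ (α + (j:ℝ)) * (1 - x) ^ (γ + (l:ℝ))) := by
        funext x; simp
      rwa [e] at h
    have hI2 : ∀ k : ℕ, IntervalIntegrable
        (fun x : ℝ => ∑ j ∈ range (k+2), ∑ l ∈ range (n+2),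
          T k j l * (x ^ (α + (j:ℝ)) * (1 - x) ^ (γ + (l:ℝ)))) volume 0 1 := by
      intro k
      have h := IntervalIntegrable.sum (μ := volume) (a := 0) (b := 1) (range (k+2))
        (f := fun j (x : ℝ) => ∑ l ∈ range (n+2), T k j l * (x ^ (α + (j:ℝ)) * (1 - x) ^ (γ + (l:ℝ))))
        (fun j _ => hI1 k j)
      have e : (∑ j ∈ range (k+2),
          fun (x : ℝ) => ∑ l ∈ range (n+2), T k j l * (x ^ (α + (j:ℝ)) * (1 - x) ^ (γ + (l:ℝ))))
          = fun x : ℝ => ∑ j ∈ range (k+2), ∑ l ∈ range (n+2),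
              T k j l * (x ^ (α + (j:ℝ)) * (1 - x) ^ (γ + (l:ℝ))) := by
        funext x; simp
      rwa [e] at h
    rw [intervalIntegral.integral_finset_sum (fun k _ => hI2 k)]
    refine Finset.sum_congr rfl fun k _ => ?_
    rw [intervalIntegral.integral_finset_sum (fun j _ => hI1 k j)]
    refine Finset.sum_congr rfl fun j _ => ?_
    rw [intervalIntegral.integral_finset_sum (fun l _ => (hatom j l).const_mul (T k j l))]
    refine Finset.sum_congr rfl fun l _ => ?_
    rw [intervalIntegral.integral_const_mul,
      beta_eval (by have := Nat.cast_nonneg (α := ℝ) j; linarith)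
        (by have := Nat.cast_nonneg (α := ℝ) l; linarith)]
  rw [hint]
  -- Step 4: evaluate the inner sum via Chu–Vandermonde
  have hMl : ∀ j : ℕ, ∑ l ∈ range (n+2),
        E1 l * (Real.Gamma (α + (j : ℝ) + 1) * Real.Gamma (γ + (l : ℝ) + 1) /
          Real.Gamma (α + (j : ℝ) + (γ + (l : ℝ)) + 2))
      = (poch (γ + 1) (n+1) / (Nat.factorial (n+1) : ℝ)) *
          (Real.Gamma (α + (j : ℝ) + 1) * Real.Gamma (γ + 1) / Real.Gamma (γ + α + (j : ℝ) + 2)) *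
          (poch ((j : ℝ) - n) (n+1) / poch (γ + α + (j : ℝ) + 2) (n+1)) := by
    intro j
    have hj0 : (0:ℝ) ≤ (j:ℝ) := Nat.cast_nonneg j
    have hjc : (0:ℝ) < γ + α + (j:ℝ) + 2 := by linarith
    have hG1 : ∀ l : ℕ, Real.Gamma (γ + (l:ℝ) + 1) = Real.Gamma (γ+1) * poch (γ+1) l := by
      intro l
      rw [show γ + (l:ℝ) + 1 = (γ+1) + (l:ℝ) from by ring]
      exact Gamma_add_poch (by linarith) l
    have hG2 : ∀ l : ℕ, Real.Gamma (α + (j:ℝ) + (γ + (l:ℝ)) + 2)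
        = Real.Gamma (γ+α+(j:ℝ)+2) * poch (γ+α+(j:ℝ)+2) l := by
      intro l
      rw [show α + (j:ℝ) + (γ + (l:ℝ)) + 2 = (γ+α+(j:ℝ)+2) + (l:ℝ) from by ring]
      exact Gamma_add_poch hjc l
    have hterm : ∀ l ∈ range (n+2), E1 l *
        (Real.Gamma (α + (j : ℝ) + 1) * Real.Gamma (γ + (l : ℝ) + 1) /
          Real.Gamma (α + (j : ℝ) + (γ + (l : ℝ)) + 2))
        = ((poch (γ + 1) (n+1) / (Nat.factorial (n+1) : ℝ)) *
            (Real.Gamma (α + (j:ℝ) + 1) * Real.Gamma (γ+1) / Real.Gamma (γ+α+(j:ℝ)+2))) *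
          (poch (-((n+1 : ℕ) : ℝ)) l * poch (((n+1 : ℕ) : ℝ) + γ + α + 1) l /
            (poch (γ+α+(j:ℝ)+2) l * (Nat.factorial l : ℝ))) := by
      intro l _
      simp only [hE1]
      rw [hG1 l, hG2 l]
      have h1 : poch (γ+1) l ≠ 0 := poch_ne_zero (by linarith) l
      have h2 : poch (γ+α+(j:ℝ)+2) l ≠ 0 := poch_ne_zero hjc l
      have h3 : (Nat.factorial l : ℝ) ≠ 0 := by exact_mod_cast (Nat.factorial_pos l).ne'
      have h4 : Real.Gamma (γ+α+(j:ℝ)+2) ≠ 0 := (Real.Gamma_pos_of_pos hjc).ne'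
      have h5 : (Nat.factorial (n+1) : ℝ) ≠ 0 := by exact_mod_cast (Nat.factorial_pos (n+1)).ne'
      field_simp
    rw [Finset.sum_congr rfl hterm, ← Finset.mul_sum]
    have hcv : ∑ l ∈ range (n+2),
        poch (-((n+1 : ℕ) : ℝ)) l * poch (((n+1 : ℕ) : ℝ) + γ + α + 1) l /
          (poch (γ+α+(j:ℝ)+2) l * (Nat.factorial l : ℝ))
        = poch ((γ+α+(j:ℝ)+2) - (((n+1 : ℕ) : ℝ) + γ + α + 1)) (n+1) /
            poch (γ+α+(j:ℝ)+2) (n+1) :=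
      cv (n+1) _ hjc
    rw [hcv, show (γ+α+(j:ℝ)+2) - (((n+1 : ℕ) : ℝ) + γ + α + 1) = (j:ℝ) - (n:ℝ) from by
      push_cast; ring]
  -- Step 5: collapse the double sum
  have hMzero : ∀ j : ℕ, j ≤ n → poch ((j:ℝ) - (n:ℝ)) (n+1) = 0 := by
    intro j hj
    rw [show (j:ℝ) - (n:ℝ) = -(((n - j : ℕ) : ℝ)) from by
      rw [Nat.cast_sub hj]; ring]
    exact poch_neg_nat_eq_zero (by omega)
  have hinner : ∀ k : ℕ, ∀ j : ℕ, ∑ l ∈ range (n+2),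
      T k j l * (Real.Gamma (α + (j : ℝ) + 1) * Real.Gamma (γ + (l : ℝ) + 1) /
        Real.Gamma (α + (j : ℝ) + (γ + (l : ℝ)) + 2))
      = (E2 k * ((-1 : ℝ) ^ j * (((k+1).choose j : ℕ) : ℝ))) *
        ((poch (γ + 1) (n+1) / (Nat.factorial (n+1) : ℝ)) *
          (Real.Gamma (α + (j : ℝ) + 1) * Real.Gamma (γ + 1) / Real.Gamma (γ + α + (j : ℝ) + 2)) *
          (poch ((j : ℝ) - n) (n+1) / poch (γ + α + (j : ℝ) + 2) (n+1))) := by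
    intro k j
    rw [← hMl j, Finset.mul_sum]
    refine Finset.sum_congr rfl fun l _ => ?_
    simp only [hT]
    ring
  have hcollapse : ∀ k ∈ range (n+1), ∀ j ∈ range (k+2), j ≠ n + 1 →
      (∑ l ∈ range (n+2),
        T k j l * (Real.Gamma (α + (j : ℝ) + 1) * Real.Gamma (γ + (l : ℝ) + 1) /
          Real.Gamma (α + (j : ℝ) + (γ + (l : ℝ)) + 2))) = 0 := by
    intro k hk j hj hjn
    rw [hinner k j]
    have hkn : k ≤ n := by simpa [Nat.lt_succ_iff] using hk
    have hjn' : j ≤ n := by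
      have : j < k + 2 := by simpa using hj
      omega
    rw [hMzero j hjn']
    simp
  rw [Finset.sum_eq_single n
    (fun b hb hbn => Finset.sum_eq_zero (fun j hj => hcollapse b hb j hj (by
      have h1 : j < b + 2 := by simpa using hj
      have h2 : b < n + 1 := by simpa using hb
      omega)))
    (fun h => absurd (Finset.self_mem_range_succ n) h)]
  rw [Finset.sum_eq_single (n+1)
    (fun j hj hjn => hcollapse n (Finset.self_mem_range_succ n) j hj hjn)
    (fun h => absurd (by simp : n + 1 ∈ range (n+2)) h)]
  rw [hinner n (n+1)]
  simp only [Nat.choose_self, Nat.cast_one, mul_one]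
  have hE2n : E2 n = (-1:ℝ)^n * (poch ((n:ℝ)+(γ+2)+α+1) n / (Nat.factorial n : ℝ)) := by
    simp only [hE2]
    rw [poch_neg_nat (le_refl n), Nat.choose_self, Nat.cast_one]
    have h1 : poch (γ+2+1) n ≠ 0 := poch_ne_zero (by linarith) n
    have h2 : (Nat.factorial n : ℝ) ≠ 0 := by exact_mod_cast (Nat.factorial_pos n).ne'
    field_simp
  have hsgn : ∀ a b : ℝ, ((-1:ℝ)^n * a) * ((-1:ℝ)^(n+1)) * b = -(a*b) := by
    intro a b
    have h2 : ((-1:ℝ))^n * (-1)^n = 1 := by rw [← mul_pow]; norm_num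
    rw [pow_succ]
    linear_combination (-(a*b)) * h2
  rw [hE2n, hsgn]
  rw [show α + ((n+1:ℕ):ℝ) + 1 = (α+1) + ((n+1:ℕ):ℝ) from by ring,
    Gamma_add_poch (by linarith : (0:ℝ) < α+1),
    show γ + α + ((n+1:ℕ):ℝ) + 2 = (γ+α+2) + ((n+1:ℕ):ℝ) from by ring,
    Gamma_add_poch (by linarith : (0:ℝ) < γ+α+2),
    show ((n+1:ℕ):ℝ) - (n:ℝ) = 1 from by push_cast; ring,
    poch_one_eq_factorial]
  have hpoch2 : poch ((γ+α+2) + ((n+1:ℕ):ℝ)) (n+1)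
      = poch ((n:ℝ)+(γ+2)+α+1) n * (((n:ℝ)+(γ+2)+α+1) + (n:ℝ)) := by
    rw [show (γ+α+2) + ((n+1:ℕ):ℝ) = (n:ℝ)+(γ+2)+α+1 from by push_cast; ring, poch_succ]
  rw [hpoch2, cJ]
  have hb0 : (0:ℝ) < (n:ℝ)+(γ+2)+α+1 := by
    have := Nat.cast_nonneg (α := ℝ) n; linarith
  have hne1 : poch ((n:ℝ)+(γ+2)+α+1) n ≠ 0 := poch_ne_zero hb0 n
  have hne2 : poch (γ+α+2) (n+1) ≠ 0 := poch_ne_zero (by linarith) (n+1)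
  have hne3 : (Nat.factorial n : ℝ) ≠ 0 := by exact_mod_cast (Nat.factorial_pos n).ne'
  have hne4 : (Nat.factorial (n+1) : ℝ) ≠ 0 := by exact_mod_cast (Nat.factorial_pos (n+1)).ne'
  have hne5 : Real.Gamma (γ+1) ≠ 0 := (Real.Gamma_pos_of_pos (by linarith)).ne'
  have hne6 : Real.Gamma (α+1) ≠ 0 := (Real.Gamma_pos_of_pos (by linarith)).ne'
  have hne7 : Real.Gamma (γ+α+2) ≠ 0 := (Real.Gamma_pos_of_pos (by linarith)).ne'
  have hne8 : ((n:ℝ)+(γ+2)+α+1) + (n:ℝ) ≠ 0 := by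
    have := Nat.cast_nonneg (α := ℝ) n; positivity
  have hne9 : 2 * ((n+1:ℕ):ℝ) + γ + α + 1 ≠ 0 := by
    have := Nat.cast_nonneg (α := ℝ) n; push_cast; linarith
  have hfact : (Nat.factorial (n+1) : ℝ) = ((n:ℝ)+1) * (Nat.factorial n : ℝ) := by
    rw [Nat.factorial_succ]; push_cast; ring
  rw [show 2 * ((n+1:ℕ):ℝ) + γ + α + 1 = ((n:ℝ)+(γ+2)+α+1) + (n:ℝ) from by push_cast; ring,
    hfact, show ((n+1:ℕ):ℝ) = (n:ℝ)+1 from by push_cast; ring]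
  have hne10 : (n:ℝ) + 1 ≠ 0 := by have := Nat.cast_nonneg (α := ℝ) n; linarith
  field_simp


end
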